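/- Let Ω be a compact metrizable space, let 𝒫 ⊆ Δ(Ω) be a nonempty compact convex set of Borel probability measures, let 𝒫' ⊆ 𝒫 be a nonempty closed convex subset, and let P* ∈ Δ(Ω). The following three conditions are equivalent: (i) P* ∈ 𝒫'; (ii) for every act f : Ω → [0,1] and every real number x, inf_{P ∈ 𝒫'} ∫ f dP > x implies ∫ f dP* > x; (iii) for all acts f, g : Ω → [0,1], if inf_{P ∈ 𝒫'} ∫ g dP ≥ inf_{P ∈ 𝒫'} ∫ f dP then ∫ g dP* ≥ inf_{P ∈ 𝒫} ∫ f dP. (Three-way equivalence: the updated set accommodates the true DGP, iff the data-driven decision objectively dominates the data-free decision across all basic decision problems, iff it objectively improves upon the data-free certainty equivalent across all decision problems.) -/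

import Mathlib

/-!
(i) ⇒ (iii) ⇒ (ii) is monotonicity of the infimum; for (iii) ⇒ (ii) compare an act `f` with
the constant act at level `MEU Q f`. For (ii) ⇒ (i), send probability measures to integration
functionals in the weak dual of `Ω →ᵇ ℝ`, injectively since `Ω` is metrizable. The image of `Q`
is compact and convex, so Hahn–Banach separates `P*` from it by a bounded continuous function,
and a positive affine rescaling of that function is an act `f` with `∫ f dP* < MEU Q f`.
-/

open MeasureTheory Set
open scoped NNReal BoundedContinuousFunction

/-- The maxmin expected-utility (MEU) value of an act `f` under a set `Q` of
probability measures: `inf_{P ∈ Q} ∫ f dP`. -/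
noncomputable def MEU {Ω : Type*} [MeasurableSpace Ω]
    (Q : Set (ProbabilityMeasure Ω)) (f : Ω → ℝ) : ℝ :=
  sInf ((fun P : ProbabilityMeasure Ω => ∫ ω, f ω ∂(P : Measure Ω)) '' Q)

instance WeakDual.instLocallyConvexSpace {E : Type*} [AddCommGroup E] [TopologicalSpace E]
    [Module ℝ E] : LocallyConvexSpace ℝ (WeakDual ℝ E) :=
  WeakBilin.locallyConvexSpace

lemma WeakDual.exists_eq_apply {𝕜 E : Type*} [NontriviallyNormedField 𝕜] [AddCommGroup E]
    [TopologicalSpace E] [Module 𝕜 E] (φ : StrongDual 𝕜 (WeakDual 𝕜 E)) :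
    ∃ x : E, ∀ ψ : WeakDual 𝕜 E, φ ψ = ψ x := by
  obtain ⟨x, rfl⟩ := LinearMap.dualEmbedding_surjective (topDualPairing 𝕜 E) φ
  exact ⟨x, fun _ => rfl⟩

namespace MeasureTheory.ProbabilityMeasure

variable {Ω : Type*} [MeasurableSpace Ω] [TopologicalSpace Ω] [OpensMeasurableSpace Ω]

noncomputable def toWeakDualBCR (P : ProbabilityMeasure Ω) : WeakDual ℝ (Ω →ᵇ ℝ) :=
  LinearMap.mkContinuous
    { toFun := fun g => ∫ ω, g ω ∂(P : Measure Ω)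
      map_add' := fun g h => integral_add (g.integrable _) (h.integrable _)
      map_smul' := fun c g => integral_smul c (g : Ω → ℝ) }
    1 (fun g => by simpa using g.norm_integral_le_norm (P : Measure Ω))

lemma toWeakDualBCR_apply (P : ProbabilityMeasure Ω) (g : Ω →ᵇ ℝ) :
    toWeakDualBCR P g = ∫ ω, g ω ∂(P : Measure Ω) := rfl

lemma continuous_toWeakDualBCR : Continuous (toWeakDualBCR (Ω := Ω)) :=
  WeakBilin.continuous_of_continuous_eval _ continuous_integral_boundedContinuousFunction

lemma toWeakDualBCR_injective [HasOuterApproxClosed Ω] [BorelSpace Ω] :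
    Function.Injective (toWeakDualBCR (Ω := Ω)) := fun _ _ h =>
  toMeasure_injective <| ext_of_forall_integral_eq_of_IsFiniteMeasure fun g =>
    congrArg (fun φ : WeakDual ℝ (Ω →ᵇ ℝ) => φ g) h

lemma convex_image_toWeakDualBCR {Q : Set (ProbabilityMeasure Ω)}
    (hQ : Convex ℝ≥0 (toMeasure '' Q)) : Convex ℝ (toWeakDualBCR '' Q) := by
  rintro _ ⟨P₁, hP₁, rfl⟩ _ ⟨P₂, hP₂, rfl⟩ a b ha hb hab
  lift a to ℝ≥0 using ha
  lift b to ℝ≥0 using hb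
  obtain ⟨P₃, hP₃, hmix⟩ := hQ ⟨P₁, hP₁, rfl⟩ ⟨P₂, hP₂, rfl⟩ a.2 b.2 (by exact_mod_cast hab)
  refine ⟨P₃, hP₃, ContinuousLinearMap.ext fun g => ?_⟩
  change ∫ ω, g ω ∂(P₃ : Measure Ω) =
    a * ∫ ω, g ω ∂(P₁ : Measure Ω) + b * ∫ ω, g ω ∂(P₂ : Measure Ω)
  rw [hmix, integral_add_measure (g.integrable _) (g.integrable _),
    integral_smul_nnreal_measure, integral_smul_nnreal_measure, NNReal.smul_def, NNReal.smul_def,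
    smul_eq_mul, smul_eq_mul]

end MeasureTheory.ProbabilityMeasure

section MEU

variable {Ω : Type*} [MeasurableSpace Ω] {Q : Set (ProbabilityMeasure Ω)} {f : Ω → ℝ}

lemma MEU_le_integral (hf : ∀ ω, 0 ≤ f ω) {P : ProbabilityMeasure Ω} (hP : P ∈ Q) :
    MEU Q f ≤ ∫ ω, f ω ∂(P : Measure Ω) :=
  csInf_le ⟨0, forall_mem_image.2 fun _ _ => integral_nonneg hf⟩ (mem_image_of_mem _ hP)

lemma le_MEU (hQ : Q.Nonempty) {c : ℝ} (h : ∀ P ∈ Q, c ≤ ∫ ω, f ω ∂(P : Measure Ω)) :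
    c ≤ MEU Q f :=
  le_csInf (hQ.image _) (forall_mem_image.2 h)

lemma MEU_anti {P : Set (ProbabilityMeasure Ω)} (hQP : Q ⊆ P) (hQ : Q.Nonempty)
    (hf : ∀ ω, 0 ≤ f ω) : MEU P f ≤ MEU Q f :=
  le_MEU hQ fun _ hR => MEU_le_integral hf (hQP hR)

lemma MEU_const (hQ : Q.Nonempty) (c : ℝ) : MEU Q (fun _ => c) = c := by
  simp only [MEU, integral_const, probReal_univ, one_smul, hQ.image_const, csInf_singleton]

lemma integral_mem_Icc_of_mem_Icc (hfm : Measurable f) (hf : ∀ ω, f ω ∈ Icc (0 : ℝ) 1)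
    (P : ProbabilityMeasure Ω) : ∫ ω, f ω ∂(P : Measure Ω) ∈ Icc (0 : ℝ) 1 := by
  have hint : Integrable f (P : Measure Ω) :=
    .of_bound hfm.aestronglyMeasurable 1 (.of_forall fun ω => abs_le.2
      ⟨by linarith [(hf ω).1], (hf ω).2⟩)
  refine ⟨integral_nonneg fun ω => (hf ω).1, ?_⟩
  simpa using integral_mono hint (integrable_const 1) fun ω => (hf ω).2

lemma MEU_mem_Icc (hQ : Q.Nonempty) (hfm : Measurable f) (hf : ∀ ω, f ω ∈ Icc (0 : ℝ) 1) :
    MEU Q f ∈ Icc (0 : ℝ) 1 := by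
  obtain ⟨P, hP⟩ := hQ
  exact ⟨le_MEU ⟨P, hP⟩ fun R _ => (integral_mem_Icc_of_mem_Icc hfm hf R).1,
    (MEU_le_integral (fun ω => (hf ω).1) hP).trans (integral_mem_Icc_of_mem_Icc hfm hf P).2⟩

end MEU

section Separation

variable {Ω : Type*} [MeasurableSpace Ω] [TopologicalSpace Ω] [BorelSpace Ω]
  [TopologicalSpace.PseudoMetrizableSpace Ω] {Q : Set (ProbabilityMeasure Ω)}
  {P : ProbabilityMeasure Ω}

open ProbabilityMeasure

lemma exists_boundedContinuous_integral_lt_of_notMem (hQcpt : IsCompact Q)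
    (hQconv : Convex ℝ≥0 (toMeasure '' Q)) (hP : P ∉ Q) :
    ∃ (g : Ω →ᵇ ℝ) (u : ℝ), ∫ ω, g ω ∂(P : Measure Ω) < u ∧
      ∀ R ∈ Q, u < ∫ ω, g ω ∂(R : Measure Ω) := by
  have hPQ : toWeakDualBCR P ∉ toWeakDualBCR '' Q := toWeakDualBCR_injective.mem_set_image.not.2 hP
  obtain ⟨φ, u, hφP, hφQ⟩ := geometric_hahn_banach_point_closed
    (convex_image_toWeakDualBCR hQconv) (hQcpt.image continuous_toWeakDualBCR).isClosed hPQ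
  obtain ⟨g, hg⟩ := WeakDual.exists_eq_apply φ
  refine ⟨g, u, ?_, fun R hR => ?_⟩
  · simpa only [hg, toWeakDualBCR_apply] using hφP
  · simpa only [hg, toWeakDualBCR_apply] using hφQ _ (mem_image_of_mem _ hR)

lemma exists_act_integral_lt_MEU_of_notMem (hQne : Q.Nonempty) (hQcpt : IsCompact Q)
    (hQconv : Convex ℝ≥0 (toMeasure '' Q)) (hP : P ∉ Q) :
    ∃ f : Ω → ℝ, Measurable f ∧ (∀ ω, f ω ∈ Icc (0 : ℝ) 1) ∧
      ∫ ω, f ω ∂(P : Measure Ω) < MEU Q f := by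
  obtain ⟨g, u, hgP, hgQ⟩ := exists_boundedContinuous_integral_lt_of_notMem hQcpt hQconv hP
  set a : ℝ := (2 * (‖g‖ + 1))⁻¹
  have ha : 0 < a := by positivity
  have hag : ∀ ω, |a * g ω| < 1 / 2 := fun ω => by
    rw [abs_mul, abs_of_pos ha]
    calc a * |g ω| ≤ a * ‖g‖ := by gcongr; exact g.norm_coe_le_norm ω
      _ < 1 / 2 := by rw [inv_mul_lt_iff₀ (by positivity)]; linarith
  have hint : ∀ R : ProbabilityMeasure Ω,
      ∫ ω, a * g ω + 1 / 2 ∂(R : Measure Ω) = a * ∫ ω, g ω ∂(R : Measure Ω) + 1 / 2 := fun R => by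
    rw [integral_add ((g.integrable _).const_mul a) (integrable_const _), integral_const_mul]
    simp
  refine ⟨fun ω => a * g ω + 1 / 2, (g.continuous.measurable.const_mul a).add_const _,
    fun ω => ?_, ?_⟩
  · constructor <;> linarith [abs_lt.1 (hag ω)]
  · calc ∫ ω, a * g ω + 1 / 2 ∂(P : Measure Ω) = a * ∫ ω, g ω ∂(P : Measure Ω) + 1 / 2 := hint P
      _ < a * u + 1 / 2 := by gcongr
      _ ≤ MEU Q _ := le_MEU hQne fun R hR => by rw [hint]; gcongr; exact (hgQ R hR).le

end Separation

theorem threeway_equivalence_general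
    {Ω : Type*} [MeasurableSpace Ω] [TopologicalSpace Ω] [BorelSpace Ω]
    [TopologicalSpace.MetrizableSpace Ω]
    (P Q : Set (ProbabilityMeasure Ω))
    (hPcpt : IsCompact P)
    (hQne : Q.Nonempty) (hQsub : Q ⊆ P) (hQcl : IsClosed Q)
    (hQconv : Convex ℝ≥0 (ProbabilityMeasure.toMeasure '' Q))
    (Pstar : ProbabilityMeasure Ω) :
    List.TFAE
      [ Pstar ∈ Q,
        ∀ f : Ω → ℝ, Measurable f → (∀ ω, f ω ∈ Icc (0 : ℝ) 1) →
          ∀ x : ℝ, MEU Q f > x → (∫ ω, f ω ∂(Pstar : Measure Ω)) > x,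
        ∀ f g : Ω → ℝ,
          Measurable f → (∀ ω, f ω ∈ Icc (0 : ℝ) 1) →
          Measurable g → (∀ ω, g ω ∈ Icc (0 : ℝ) 1) →
          MEU Q g ≥ MEU Q f →
          (∫ ω, g ω ∂(Pstar : Measure Ω)) ≥ MEU P f ] := by
  tfae_have 1 → 3 := fun hPstar f g _ hf _ hg hfg =>
    calc MEU P f ≤ MEU Q f := MEU_anti hQsub hQne fun ω => (hf ω).1
      _ ≤ MEU Q g := hfg
      _ ≤ _ := MEU_le_integral (fun ω => (hg ω).1) hPstar
  tfae_have 3 → 2 := by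
    intro h3 f hfm hf x hx
    have h := h3 (fun _ => MEU Q f) f measurable_const (fun _ => MEU_mem_Icc hQne hfm hf) hfm hf
      (MEU_const hQne _).le
    rw [MEU_const (hQne.mono hQsub)] at h
    exact hx.trans_le h
  tfae_have 2 → 1 := by
    intro h2
    by_contra hPstar
    obtain ⟨f, hfm, hf, hlt⟩ := exists_act_integral_lt_MEU_of_notMem hQne
      (hPcpt.of_isClosed_subset hQcl hQsub) hQconv hPstar
    exact lt_irrefl _ (h2 f hfm hf _ hlt)
  tfae_finish

/-- **Corollary (three-way equivalence).** (i) the updated set `Q` accommodates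
the true DGP `P*`; (ii) the data-driven decision objectively dominates the
data-free decision across all basic decision problems; (iii) it objectively
improves upon the data-free certainty equivalent across all decision
problems. -/
theorem threeway_equivalence
    {Ω : Type*} [MeasurableSpace Ω] [TopologicalSpace Ω] [BorelSpace Ω]
    [CompactSpace Ω] [TopologicalSpace.MetrizableSpace Ω]
    (P Q : Set (ProbabilityMeasure Ω))
    (hPne : P.Nonempty) (hPcpt : IsCompact P)
    (hPconv : Convex ℝ≥0 (ProbabilityMeasure.toMeasure '' P))
    (hQne : Q.Nonempty) (hQsub : Q ⊆ P) (hQcl : IsClosed Q)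
    (hQconv : Convex ℝ≥0 (ProbabilityMeasure.toMeasure '' Q))
    (Pstar : ProbabilityMeasure Ω) :
    List.TFAE
      [ Pstar ∈ Q,
        ∀ f : Ω → ℝ, Measurable f → (∀ ω, f ω ∈ Icc (0 : ℝ) 1) →
          ∀ x : ℝ, MEU Q f > x → (∫ ω, f ω ∂(Pstar : Measure Ω)) > x,
        ∀ f g : Ω → ℝ,
          Measurable f → (∀ ω, f ω ∈ Icc (0 : ℝ) 1) →
          Measurable g → (∀ ω, g ω ∈ Icc (0 : ℝ) 1) →
          MEU Q g ≥ MEU Q f →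
          (∫ ω, g ω ∂(Pstar : Measure Ω)) ≥ MEU P f ] :=
  threeway_equivalence_general P Q hPcpt hQne hQsub hQcl hQconv Pstar
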